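/- Let K be a field of characteristic 2 and let φ: K[A,B,C,D,E] → K[x₁,x₂,x₃,x₄] be the ring homomorphism sending A,B,C,D to the elementary symmetric polynomials s₁,s₂,s₃,s₄ and E to Δ₄, the A₄-orbit sum of x₁³x₂²x₃. Then the polynomial f = E² + (A²D + ABC + C²)E + A⁴D² + A³C³ + A²B³D + B³C² + C⁴ lies in the kernel of φ. -/

import Mathlib

/-!
In characteristic 2, `Δ₄` and its conjugate under an odd permutation are the two roots of
`f(s₁, s₂, s₃, s₄, E)` as a quadratic in `E`. We check this by brute force: once the `s_k` and the
twelve monomials of `Δ₄` are written out (an even permutation of `Fin 4` is determined by the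
images of `0, 1, 2`), `f(s₁, …, s₄, Δ₄)` expanded over `ℤ` has only even coefficients.
-/

open MvPolynomial

/-- The `A₄`-orbit sum of the monomial `x₁³x₂²x₃`. -/
noncomputable def Delta4 (K : Type*) [CommRing K] : MvPolynomial (Fin 4) K :=
  letI : DecidableEq (MvPolynomial (Fin 4) K) := Classical.decEq _
  (Finset.univ.image (fun σ : alternatingGroup (Fin 4) =>
    rename (σ : Equiv.Perm (Fin 4)) (X 0 ^ 3 * X 1 ^ 2 * X 2))).sum id

theorem Finsupp.mapDomain_perm_injective {σ M : Type*} [AddCommMonoid M] {d : σ →₀ M}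
    (hd : Function.Injective d) :
    Function.Injective fun e : Equiv.Perm σ => d.mapDomain e := by
  intro e e' h
  ext i
  have key := DFunLike.congr_fun h (e i)
  rw [Finsupp.mapDomain_apply e.injective, ← e'.apply_symm_apply (e i),
    Finsupp.mapDomain_apply e'.injective] at key
  exact (e'.apply_symm_apply (e i)).symm.trans (congrArg e' (hd key).symm)

theorem MvPolynomial.rename_monomial_perm_injective {σ R : Type*} [CommSemiring R]
    {d : σ →₀ ℕ} (hd : Function.Injective d) {r : R} (hr : r ≠ 0) :
    Function.Injective fun e : Equiv.Perm σ => rename e (monomial d r) := by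
  intro e e' h
  simp only [rename_monomial] at h
  exact Finsupp.mapDomain_perm_injective hd (monomial_left_injective hr h)

theorem sum_alternatingGroup_fin_four {M : Type*} [AddCommMonoid M]
    (g : Fin 4 → Fin 4 → Fin 4 → M) :
    ∑ σ : alternatingGroup (Fin 4), g (σ.1 0) (σ.1 1) (σ.1 2) =
      g 0 1 2 + g 0 2 3 + g 0 3 1 + g 1 0 3 + g 1 2 0 + g 1 3 2
      + g 2 0 1 + g 2 1 3 + g 2 3 0 + g 3 0 2 + g 3 1 0 + g 3 2 1 := by
  let t : alternatingGroup (Fin 4) → Fin 4 × Fin 4 × Fin 4 := fun σ => (σ.1 0, σ.1 1, σ.1 2)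
  have ht : Function.Injective t := by decide
  have himg : Finset.univ.image t =
      {(0, 1, 2), (0, 2, 3), (0, 3, 1), (1, 0, 3), (1, 2, 0), (1, 3, 2),
        (2, 0, 1), (2, 1, 3), (2, 3, 0), (3, 0, 2), (3, 1, 0), (3, 2, 1)} := by
    decide
  rw [← Finset.sum_image (f := fun p => g p.1 p.2.1 p.2.2) ht.injOn, himg]
  simp [add_assoc]

section Esymm

variable {R : Type*} [CommSemiring R]

theorem Multiset.esymm_zero_right (s : Multiset R) : s.esymm 0 = 1 := by
  simp [Multiset.esymm]

theorem Multiset.esymm_zero_left (n : ℕ) : (0 : Multiset R).esymm (n + 1) = 0 := by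
  simp [Multiset.esymm, Multiset.powersetCard_zero_right]

theorem Multiset.esymm_cons_succ (a : R) (s : Multiset R) (n : ℕ) :
    (a ::ₘ s).esymm (n + 1) = a * s.esymm n + s.esymm (n + 1) := by
  simp [Multiset.esymm, Multiset.powersetCard_cons, Multiset.sum_map_mul_left, add_comm]

variable (R)

theorem esymm_fin_four (k : ℕ) : esymm (Fin 4) R k = Multiset.esymm {X 0, X 1, X 2, X 3} k := by
  rw [esymm_eq_multiset_esymm]
  rfl

theorem esymm_fin_four_one : esymm (Fin 4) R 1 = X 0 + X 1 + X 2 + X 3 := by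
  simp only [esymm_fin_four, Multiset.insert_eq_cons, ← Multiset.cons_zero,
    Multiset.esymm_cons_succ, Multiset.esymm_zero_right, Multiset.esymm_zero_left]
  ring

theorem esymm_fin_four_two :
    esymm (Fin 4) R 2 = X 0 * X 1 + X 0 * X 2 + X 0 * X 3 + X 1 * X 2 + X 1 * X 3 + X 2 * X 3 := by
  simp only [esymm_fin_four, Multiset.insert_eq_cons, ← Multiset.cons_zero,
    Multiset.esymm_cons_succ, Multiset.esymm_zero_right, Multiset.esymm_zero_left]
  ring

theorem esymm_fin_four_three :
    esymm (Fin 4) R 3 = X 0 * X 1 * X 2 + X 0 * X 1 * X 3 + X 0 * X 2 * X 3 + X 1 * X 2 * X 3 := by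
  simp only [esymm_fin_four, Multiset.insert_eq_cons, ← Multiset.cons_zero,
    Multiset.esymm_cons_succ, Multiset.esymm_zero_right, Multiset.esymm_zero_left]
  ring

theorem esymm_fin_four_four : esymm (Fin 4) R 4 = X 0 * X 1 * X 2 * X 3 := by
  simp only [esymm_fin_four, Multiset.insert_eq_cons, ← Multiset.cons_zero,
    Multiset.esymm_cons_succ, Multiset.esymm_zero_right, Multiset.esymm_zero_left]
  ring

end Esymm

theorem X_pow_three_mul_X_pow_two_mul_X_eq_monomial (R : Type*) [CommSemiring R] :
    (X 0 ^ 3 * X 1 ^ 2 * X 2 : MvPolynomial (Fin 4) R) =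
      monomial (Finsupp.single 0 3 + Finsupp.single 1 2 + Finsupp.single 2 1) 1 := by
  simp only [X_pow_eq_monomial, monomial_mul, mul_one]
  rw [X, monomial_mul, mul_one]

section Delta4

variable (K : Type*) [CommRing K] [Nontrivial K]

theorem delta4_eq_sum :
    Delta4 K = ∑ σ : alternatingGroup (Fin 4), rename σ.1 (X 0 ^ 3 * X 1 ^ 2 * X 2) := by
  -- the instance that `Delta4` uses, so that `Finset.sum_image` applies
  let _ : DecidableEq (MvPolynomial (Fin 4) K) := Classical.decEq _
  rw [Delta4, Finset.sum_image]
  · rfl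
  intro σ _ τ _ h
  rw [X_pow_three_mul_X_pow_two_mul_X_eq_monomial] at h
  refine Subtype.val_injective (rename_monomial_perm_injective ?_ one_ne_zero h)
  intro i j hij
  simp only [Finsupp.add_apply, Finsupp.single_apply] at hij
  revert i j
  decide

theorem delta4_eq :
    Delta4 K = X 0 ^ 3 * X 1 ^ 2 * X 2 + X 0 ^ 3 * X 2 ^ 2 * X 3 + X 0 ^ 3 * X 3 ^ 2 * X 1
      + X 1 ^ 3 * X 0 ^ 2 * X 3 + X 1 ^ 3 * X 2 ^ 2 * X 0 + X 1 ^ 3 * X 3 ^ 2 * X 2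
      + X 2 ^ 3 * X 0 ^ 2 * X 1 + X 2 ^ 3 * X 1 ^ 2 * X 3 + X 2 ^ 3 * X 3 ^ 2 * X 0
      + X 3 ^ 3 * X 0 ^ 2 * X 2 + X 3 ^ 3 * X 1 ^ 2 * X 0 + X 3 ^ 3 * X 2 ^ 2 * X 1 := by
  rw [delta4_eq_sum]
  simp only [map_mul, map_pow, rename_X]
  exact sum_alternatingGroup_fin_four fun a b c => X a ^ 3 * X b ^ 2 * X c

end Delta4

set_option maxHeartbeats 300000 in
set_option maxRecDepth 2000 in
theorem quadratic_relation_of_charP_two {R : Type*} [CommRing R] [CharP R 2]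
    {a b c d A B C D E : R} (hA : A = a + b + c + d)
    (hB : B = a * b + a * c + a * d + b * c + b * d + c * d)
    (hC : C = a * b * c + a * b * d + a * c * d + b * c * d) (hD : D = a * b * c * d)
    (hE : E = a ^ 3 * b ^ 2 * c + a ^ 3 * c ^ 2 * d + a ^ 3 * d ^ 2 * b
      + b ^ 3 * a ^ 2 * d + b ^ 3 * c ^ 2 * a + b ^ 3 * d ^ 2 * c
      + c ^ 3 * a ^ 2 * b + c ^ 3 * b ^ 2 * d + c ^ 3 * d ^ 2 * a
      + d ^ 3 * a ^ 2 * c + d ^ 3 * b ^ 2 * a + d ^ 3 * c ^ 2 * b) :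
    E ^ 2 + (A ^ 2 * D + A * B * C + C ^ 2) * E + A ^ 4 * D ^ 2 + A ^ 3 * C ^ 3
      + A ^ 2 * B ^ 3 * D + B ^ 3 * C ^ 2 + C ^ 4 = 0 := by
  subst hA hB hC hD hE
  ring_nf
  reduce_mod_char!

/-- The polynomial `f = E² + (A²D+ABC+C²)E + A⁴D² + A³C³ + A²B³D + B³C² + C⁴`
lies in the kernel of the `K`-algebra map `K[A,B,C,D,E] → K[x₁,x₂,x₃,x₄]`
sending `A,B,C,D` to the elementary symmetric polynomials `s₁,s₂,s₃,s₄` and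
`E` to `Δ₄`. -/
theorem quotientPoly_mem_ker (K : Type*) [Field K] [CharP K 2] :
    letI φ : MvPolynomial (Fin 5) K →ₐ[K] MvPolynomial (Fin 4) K :=
      aeval ![esymm (Fin 4) K 1, esymm (Fin 4) K 2, esymm (Fin 4) K 3,
        esymm (Fin 4) K 4, Delta4 K]
    (X 4 ^ 2 + (X 0 ^ 2 * X 3 + X 0 * X 1 * X 2 + X 2 ^ 2) * X 4
        + X 0 ^ 4 * X 3 ^ 2 + X 0 ^ 3 * X 2 ^ 3 + X 0 ^ 2 * X 1 ^ 3 * X 3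
        + X 1 ^ 3 * X 2 ^ 2 + X 2 ^ 4 : MvPolynomial (Fin 5) K)
      ∈ RingHom.ker φ.toRingHom := by
  rw [RingHom.mem_ker]
  simp only [AlgHom.toRingHom_eq_coe, RingHom.coe_coe, map_add, map_mul, map_pow, aeval_X,
    Matrix.cons_val]
  exact quadratic_relation_of_charP_two (esymm_fin_four_one K) (esymm_fin_four_two K)
    (esymm_fin_four_three K) (esymm_fin_four_four K) (delta4_eq K)
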